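/- arXiv:0907.4079 — 4 statements merged into one kernel-verified Lean document; each statement's English description precedes it below -/
import Mathlib

section
/- Let F be a family of finite connected relational structures and let A, B be relational structures with A, B ∈ Forb_h(F) (no member of F admits a homomorphism into them). Let C be a common induced substructure and let D be the free amalgam of A and B over C (vertex set A ∪ B with a tuple in a relation of D iff it is a tuple of A or of B). If there exists a homomorphism φ: F → D for some F ∈ F, then φ⁻¹(C) is nonempty and forms a cut of F. -/
/-- A relational structure of type given by arities `ar : I → ℕ`. -/
structure RelStruct (I : Type) (ar : I → ℕ) : Type 1 where
  V : Type
  rel : ∀ i, Set (Fin (ar i) → V)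

namespace RelStruct

variable {I : Type} {ar : I → ℕ}

/-- `f` is a homomorphism from `A` to `B`. -/
def IsHom (A B : RelStruct I ar) (f : A.V → B.V) : Prop :=
  ∀ i, ∀ t ∈ A.rel i, (f ∘ t) ∈ B.rel i

/-- `f` is an embedding (injective homomorphism). -/
def IsEmbedding (A B : RelStruct I ar) (f : A.V → B.V) : Prop :=
  Function.Injective f ∧ IsHom A B f

/-- `f` is a strong (induced-substructure) embedding. -/
def IsStrongEmb (A B : RelStruct I ar) (f : A.V → B.V) : Prop :=
  Function.Injective f ∧ ∀ i (t : Fin (ar i) → A.V), t ∈ A.rel i ↔ (f ∘ t) ∈ B.rel i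

/-- Isomorphism of relational structures. -/
def Iso (A B : RelStruct I ar) : Prop :=
  ∃ e : A.V ≃ B.V, ∀ i (t : Fin (ar i) → A.V), t ∈ A.rel i ↔ (⇑e ∘ t) ∈ B.rel i

/-- The Gaifman graph of a relational structure. -/
def gaifman (A : RelStruct I ar) : SimpleGraph A.V where
  Adj x y := x ≠ y ∧ ∃ i, ∃ t ∈ A.rel i, x ∈ Set.range t ∧ y ∈ Set.range t
  symm := by
    constructor
    rintro x y ⟨hxy, i, t, ht, hx, hy⟩
    exact ⟨hxy.symm, i, t, ht, hy, hx⟩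
  loopless := by
    constructor
    rintro x ⟨h, -⟩
    exact h rfl

/-- The substructure induced on a set of vertices. -/
def induce (A : RelStruct I ar) (S : Set A.V) : RelStruct I ar where
  V := S
  rel i := {t | (fun k => (t k : A.V)) ∈ A.rel i}

/-- `C` is a cut: removing it disconnects the Gaifman graph. -/
def IsCut (A : RelStruct I ar) (C : Set A.V) : Prop :=
  ¬ (A.induce Cᶜ).gaifman.Preconnected

/-- `C` is an inclusion-minimal cut. -/
def IsMinCut (A : RelStruct I ar) (C : Set A.V) : Prop :=
  A.IsCut C ∧ ∀ C' ⊂ C, ¬ A.IsCut C'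

/-- `(R, K)` determines a piece of `A`: `R` is a minimal cut and `K` is the vertex set of a
connected component of the Gaifman graph of `A` with `R` removed. -/
def IsPiece (A : RelStruct I ar) (R K : Set A.V) : Prop :=
  A.IsMinCut R ∧ ∃ v : (A.induce Rᶜ).V,
    K = Subtype.val '' {w | (A.induce Rᶜ).gaifman.Reachable v w}

/-- A structure is irreducible if any two distinct vertices lie in a common tuple. -/
def Irreducible (A : RelStruct I ar) : Prop :=
  ∀ x y : A.V, x ≠ y → ∃ i, ∃ t ∈ A.rel i, x ∈ Set.range t ∧ y ∈ Set.range t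

/-- `A` omits homomorphisms from all members of `F`. -/
def ForbH (F : Set (RelStruct I ar)) (A : RelStruct I ar) : Prop :=
  ∀ F₀ ∈ F, ∀ f : F₀.V → A.V, ¬ IsHom F₀ A f

/-- `A` omits embeddings from all members of `F`. -/
def ForbE (F : Set (RelStruct I ar)) (A : RelStruct I ar) : Prop :=
  ∀ F₀ ∈ F, ∀ f : F₀.V → A.V, ¬ IsEmbedding F₀ A f

end RelStruct
namespace RelStruct

variable {I : Type} {ar : I → ℕ} {I' : Type} {m : I' → ℕ}

/-- The canonical lift `L(A)`: for each piece `(P j, r j)` a new `m j`-ary relation recording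
root images of homomorphisms of the piece into `A`. -/
def canonicalLift (P : I' → RelStruct I ar) (r : ∀ j, Fin (m j) → (P j).V)
    (A : RelStruct I ar) : RelStruct (I ⊕ I') (Sum.elim ar m) where
  V := A.V
  rel := fun i => match i with
    | Sum.inl i => A.rel i
    | Sum.inr j => {t | ∃ f : (P j).V → A.V, IsHom (P j) A f ∧ f ∘ r j = t}

/-- Isomorphism of rooted structures. -/
def RootedIso {n : ℕ} (Q Q' : RelStruct I ar) (ρ : Fin n → Q.V) (ρ' : Fin n → Q'.V) : Prop :=
  ∃ e : Q.V ≃ Q'.V, (∀ i (t : Fin (ar i) → Q.V), t ∈ Q.rel i ↔ (⇑e ∘ t) ∈ Q'.rel i) ∧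
    ∀ k, e (ρ k) = ρ' k

/-- `(Q, ρ)` is (a copy of) a piece of `A`, rooted at an enumeration of the minimal cut. -/
def IsRootedPiece (A : RelStruct I ar) {n : ℕ} (Q : RelStruct I ar) (ρ : Fin n → Q.V) : Prop :=
  ∃ R K : Set A.V, A.IsPiece R K ∧ ∃ e : Q.V ≃ (A.induce (R ∪ K)).V,
    (∀ i (t : Fin (ar i) → Q.V), t ∈ Q.rel i ↔ (⇑e ∘ t) ∈ (A.induce (R ∪ K)).rel i) ∧
    Function.Injective ρ ∧ Set.range (fun k => ((e (ρ k)).1 : A.V)) = R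

/-- Membership in the class `L` of induced substructures of canonical lifts of members
of `Forb_h(F)`. -/
def InL (F : Set (RelStruct I ar)) (P : I' → RelStruct I ar) (r : ∀ j, Fin (m j) → (P j).V)
    (X : RelStruct (I ⊕ I') (Sum.elim ar m)) : Prop :=
  ∃ A : RelStruct I ar, ForbH F A ∧ ∃ S : Set A.V,
    Iso X ((canonicalLift P r A).induce S)

/-- Disjoint union of two structures. -/
def disjUnion (A B : RelStruct I ar) : RelStruct I ar where
  V := A.V ⊕ B.V
  rel i := {t | (∃ t₁ ∈ A.rel i, t = Sum.inl ∘ t₁) ∨ (∃ t₂ ∈ B.rel i, t = Sum.inr ∘ t₂)}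

/-- The identifications of the indicator construction. -/
def indRel {S : Type} {n : ℕ} (Rs : Set (Fin n → S)) (A : RelStruct I ar)
    (ρ : Fin n → A.V) : ↥Rs × A.V → ↥Rs × A.V → Prop := fun p q =>
  ∃ i j : Fin n, p.2 = ρ i ∧ q.2 = ρ j ∧ (p.1 : Fin n → S) i = (q.1 : Fin n → S) j

/-- The indicator construction `S * (A, ρ)`: each tuple of `Rs` is replaced by a copy of `A`
with roots identified according to the tuple. -/
def indicator {S : Type} {n : ℕ} (Rs : Set (Fin n → S)) (A : RelStruct I ar)
    (ρ : Fin n → A.V) : RelStruct I ar where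
  V := Quot (indRel Rs A ρ)
  rel i := {t | ∃ (u : ↥Rs) (t' : Fin (ar i) → A.V), t' ∈ A.rel i ∧
    ∀ k, t k = Quot.mk (indRel Rs A ρ) (u, t' k)}

/-- The disjoint union of `|Rs|` copies of `A`. -/
def copies {S : Type} {n : ℕ} (Rs : Set (Fin n → S)) (A : RelStruct I ar) : RelStruct I ar where
  V := ↥Rs × A.V
  rel i := {t | (∃ u, ∀ k, (t k).1 = u) ∧ (fun k => (t k).2) ∈ A.rel i}

/-- A one-vertex structure over the countable type `ar : ℕ → ℕ`, with relation `i`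
inhabited iff `i ∈ s`. -/
def oneVertex (ar' : ℕ → ℕ) (s : Set ℕ) : RelStruct ℕ ar' where
  V := PUnit
  rel i := {_t | i ∈ s}

/-- The lift of `U` by countably many unary relations, the `j`-th holding exactly of the
vertex enumerated `j` by `g`. -/
def unaryLift (U : RelStruct I ar) (g : U.V → ℕ) :
    RelStruct (I ⊕ ℕ) (Sum.elim ar fun _ => 1) where
  V := U.V
  rel := fun i => match i with
    | Sum.inl i => U.rel i
    | Sum.inr j => {t | g (t ⟨0, Nat.one_pos⟩) = j}

/-- The age of `X`: the class of (finite) structures strongly embeddable into `X`. -/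
def AgeMem (X Y : RelStruct I ar) : Prop :=
  Finite Y.V ∧ ∃ f : Y.V → X.V, IsStrongEmb Y X f

end RelStruct


lemma reach_pred_aux {V : Type*} {G : SimpleGraph V} {p : V → Prop}
    (h : ∀ x y, G.Adj x y → (p x ↔ p y)) {x y : V} (hr : G.Reachable x y) : p x ↔ p y := by
  obtain ⟨w⟩ := hr
  induction w with
  | nil => rfl
  | cons a w ih => exact (h _ _ a).trans ih

open RelStruct in
/-- If a member of `F` maps homomorphically into the free amalgam `D` of `A` and `B`
(over `C = SA ∩ SB`), where both sides omit homomorphisms from `F`, then the preimage of `C`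
is a nonempty cut of that member. -/
theorem preimage_of_overlap_is_cut {I : Type} {ar : I → ℕ}
    (F : Set (RelStruct I ar)) (hF : ∀ F₀ ∈ F, Finite F₀.V ∧ F₀.gaifman.Connected)
    (D : RelStruct I ar) (SA SB : Set D.V) (hcover : SA ∪ SB = Set.univ)
    (hfree : ∀ i, ∀ t ∈ D.rel i, Set.range t ⊆ SA ∨ Set.range t ⊆ SB)
    (hA : ForbH F (D.induce SA)) (hB : ForbH F (D.induce SB))
    (F₀ : RelStruct I ar) (hF₀ : F₀ ∈ F) (φ : F₀.V → D.V) (hφ : IsHom F₀ D φ) :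
    (φ ⁻¹' (SA ∩ SB)).Nonempty ∧ F₀.IsCut (φ ⁻¹' (SA ∩ SB)) := by
  classical
  set C := SA ∩ SB with hC
  -- some vertex maps outside SA
  have hxB : ∃ x, φ x ∉ SA := by
    by_contra h
    push_neg at h
    exact hA F₀ hF₀ (fun v => ⟨φ v, h v⟩) (fun i t ht => hφ i t ht)
  have hxA : ∃ x, φ x ∉ SB := by
    by_contra h
    push_neg at h
    exact hB F₀ hF₀ (fun v => ⟨φ v, h v⟩) (fun i t ht => hφ i t ht)
  obtain ⟨xB, hxB⟩ := hxB
  obtain ⟨xA, hxA⟩ := hxA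
  have hmem : ∀ x : F₀.V, φ x ∈ SA ∪ SB := by
    intro x; rw [hcover]; trivial
  have hxBB : φ xB ∈ SB := (hmem xB).resolve_left hxB
  have hxAA : φ xA ∈ SA := (hmem xA).resolve_right hxA
  have hxAC : xA ∉ φ ⁻¹' C := fun h => hxA h.2
  have hxBC : xB ∉ φ ⁻¹' C := fun h => hxB h.1
  constructor
  · -- nonempty
    by_contra hne
    rw [Set.not_nonempty_iff_eq_empty] at hne
    have hadj : ∀ x y : F₀.V, F₀.gaifman.Adj x y → (φ x ∈ SA ↔ φ y ∈ SA) := by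
      rintro x y ⟨hne', i, t, ht, ⟨kx, hkx⟩, ⟨ky, hky⟩⟩
      have hD := hφ i t ht
      rcases hfree i _ hD with h | h
      · constructor <;> intro _
        · rw [← hky]; exact h ⟨ky, rfl⟩
        · rw [← hkx]; exact h ⟨kx, rfl⟩
      · have hx : φ x ∈ SB := by rw [← hkx]; exact h ⟨kx, rfl⟩
        have hy : φ y ∈ SB := by rw [← hky]; exact h ⟨ky, rfl⟩
        constructor <;> intro hh
        · exact absurd (Set.eq_empty_iff_forall_notMem.mp hne x) (fun h' => h' ⟨hh, hx⟩)
        · exact absurd (Set.eq_empty_iff_forall_notMem.mp hne y) (fun h' => h' ⟨hh, hy⟩)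
    have := reach_pred_aux hadj ((hF F₀ hF₀).2.preconnected xA xB)
    exact hxB (this.mp hxAA)
  · -- cut
    intro hpre
    set G := (F₀.induce (φ ⁻¹' C)ᶜ).gaifman with hG
    have hadj : ∀ x y : (F₀.induce (φ ⁻¹' C)ᶜ).V, G.Adj x y → (φ x.1 ∈ SA ↔ φ y.1 ∈ SA) := by
      rintro x y ⟨hne', i, t, ht, ⟨kx, hkx⟩, ⟨ky, hky⟩⟩
      have hD := hφ i _ ht
      rcases hfree i _ hD with h | h
      · constructor <;> intro _
        · rw [← hky]; exact h ⟨ky, rfl⟩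
        · rw [← hkx]; exact h ⟨kx, rfl⟩
      · have hx : φ x.1 ∈ SB := by rw [← hkx]; exact h ⟨kx, rfl⟩
        have hy : φ y.1 ∈ SB := by rw [← hky]; exact h ⟨ky, rfl⟩
        constructor <;> intro hh
        · exact absurd (⟨hh, hx⟩ : φ x.1 ∈ C) x.2
        · exact absurd (⟨hh, hy⟩ : φ y.1 ∈ C) y.2
    have := reach_pred_aux hadj (hpre ⟨xA, hxAC⟩ ⟨xB, hxBC⟩)
    exact hxB (this.mp hxAA)
end

section
/- For every n ≥ 1 and k ≥ 0 there exists a finite relational structure S = (S, R_S) with a single relation R_S of arity 2n and a partition S = S₁ ∪ … ∪ S_n such that: (1) every tuple (v₁,u₁,…,v_n,u_n) ∈ R_S has v_i, u_i ∈ S_i for all i and all 2n entries distinct; (2) any two distinct tuples of R_S share at most one vertex; (3) for every coloring of S with 2^k colors there is a tuple (v₁,u₁,…,v_n,u_n) ∈ R_S with v_i and u_i receiving the same color for every 1 ≤ i ≤ n; (4) every vertex of S occurs in at least one tuple of R_S. -/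
/-- Two distinct points determine a combinatorial line: if two lines share two distinct
points, they are equal as functions. -/
private lemma line_eq_of_two {α ι : Type*} (l l' : Combinatorics.Line α ι) (a b a' b' : α)
    (h1 : (l a : ι → α) = l' a') (h2 : (l b : ι → α) = l' b') (hab : a ≠ b) :
    ∀ c : α, (l c : ι → α) = l' c := by
  have hpq : (l a : ι → α) ≠ l b := by
    obtain ⟨i0, hi0⟩ := l.proper
    intro h
    have := congrFun h i0
    rw [l.apply_none a i0 hi0, l.apply_none b i0 hi0] at this
    exact hab this
  intro c
  funext i
  cases hL : l.idxFun i with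
  | none =>
    cases hL' : l'.idxFun i with
    | none => rw [l.apply_none c i hL, l'.apply_none c i hL']
    | some v =>
      exfalso
      have e1 : a = v := by
        have := congrFun h1 i
        rwa [l.apply_none a i hL, Combinatorics.Line.apply_some hL'] at this
      have e2 : b = v := by
        have := congrFun h2 i
        rwa [l.apply_none b i hL, Combinatorics.Line.apply_some hL'] at this
      exact hab (e1.trans e2.symm)
  | some v =>
    cases hL' : l'.idxFun i with
    | none =>
      exfalso
      have e1 : v = a' := by
        have := congrFun h1 i
        rwa [Combinatorics.Line.apply_some hL, l'.apply_none a' i hL'] at this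
      have e2 : v = b' := by
        have := congrFun h2 i
        rwa [Combinatorics.Line.apply_some hL, l'.apply_none b' i hL'] at this
      apply hpq
      rw [h1, h2, e1.symm.trans e2]
    | some v' =>
      have e : v = v' := by
        have := congrFun h1 i
        rwa [Combinatorics.Line.apply_some hL, Combinatorics.Line.apply_some hL'] at this
      rw [Combinatorics.Line.apply_some hL, Combinatorics.Line.apply_some hL', e]

/-- The Ramsey-type coloring lemma for structures with a single `2n`-ary relation. -/
theorem coloring_lemma (n k : ℕ) (hn : 1 ≤ n) :
    ∃ (S : Type) (_ : Fintype S) (Rs : Set (Fin (2 * n) → S)) (part : S → Fin n),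
      (∀ t ∈ Rs, Function.Injective t ∧ ∀ j : Fin (2 * n), (part (t j)).val = j.val / 2) ∧
      (∀ t ∈ Rs, ∀ t' ∈ Rs, t ≠ t' → Set.Subsingleton (Set.range t ∩ Set.range t')) ∧
      (∀ c : S → Fin (2 ^ k), ∃ t ∈ Rs, ∀ i : Fin n,
        c (t ⟨2 * i.val, by have := i.isLt; omega⟩) =
          c (t ⟨2 * i.val + 1, by have := i.isLt; omega⟩)) ∧
      (∀ v : S, ∃ t ∈ Rs, v ∈ Set.range t) := by
  classical
  obtain ⟨ι, ιfin, hHJ⟩ :=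
    Combinatorics.Line.exists_mono_in_high_dimension (Fin (2 * n)) (Fin n → Fin (2 ^ k))
  haveI := ιfin
  let V : Type := (ι → Fin (2 * n)) × Fin n
  let pt : Combinatorics.Line (Fin (2 * n)) ι → Fin (2 * n) → V := fun l j =>
    ((l j : ι → Fin (2 * n)), ⟨j.val / 2, by have := j.isLt; omega⟩)
  let P : V → Prop := fun v => ∃ l j, pt l j = v
  let S : Type := {v : V // P v}
  haveI : Finite S := Subtype.finite
  let tup : Combinatorics.Line (Fin (2 * n)) ι → Fin (2 * n) → S := fun l j => ⟨pt l j, l, j, rfl⟩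
  have hinj : ∀ (l : Combinatorics.Line (Fin (2 * n)) ι) (a b : Fin (2 * n)),
      (l a : ι → Fin (2 * n)) = l b → a = b := by
    intro l a b h
    obtain ⟨i0, hi0⟩ := l.proper
    have := congrFun h i0
    rwa [l.apply_none a i0 hi0, l.apply_none b i0 hi0] at this
  refine ⟨S, Fintype.ofFinite S, {t | ∃ l, t = tup l}, fun v => v.1.2, ?_, ?_, ?_, ?_⟩
  · rintro t ⟨l, rfl⟩
    refine ⟨?_, fun j => rfl⟩
    intro j j' h
    have h1 : pt l j = pt l j' := congrArg Subtype.val h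
    exact hinj l j j' (congrArg Prod.fst h1)
  · rintro t ⟨l, rfl⟩ t' ⟨l', rfl⟩ hne x hx y hy
    obtain ⟨⟨j1, hj1⟩, ⟨j2, hj2⟩⟩ := hx
    obtain ⟨⟨j3, hj3⟩, ⟨j4, hj4⟩⟩ := hy
    by_cases hj : j1 = j3
    · rw [← hj1, ← hj3, hj]
    · exfalso
      apply hne
      have e1 : pt l j1 = pt l' j2 := congrArg Subtype.val (hj1.trans hj2.symm)
      have e2 : pt l j3 = pt l' j4 := congrArg Subtype.val (hj3.trans hj4.symm)
      have hl : ∀ c : Fin (2 * n), (l c : ι → Fin (2 * n)) = l' c :=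
        line_eq_of_two l l' j1 j3 j2 j4 (congrArg Prod.fst e1) (congrArg Prod.fst e2) hj
      funext j
      exact Subtype.ext (Prod.ext (hl j) rfl)
  · intro c
    have hpos : 0 < 2 ^ k := by positivity
    let c' : V → Fin (2 ^ k) := fun v => if h : P v then c ⟨v, h⟩ else ⟨0, hpos⟩
    let C : (ι → Fin (2 * n)) → (Fin n → Fin (2 ^ k)) := fun x i => c' (x, i)
    obtain ⟨l, κ0, hκ⟩ := hHJ C
    refine ⟨tup l, ⟨l, rfl⟩, ?_⟩
    have key : ∀ j : Fin (2 * n),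
        c (tup l j) = κ0 ⟨j.val / 2, by have := j.isLt; omega⟩ := by
      intro j
      have h1 : c (tup l j) = c' (pt l j) := by
        simp only [c']
        rw [dif_pos (tup l j).2]
      have h2 : c' (pt l j) =
          C ((l j : ι → Fin (2 * n))) ⟨j.val / 2, by have := j.isLt; omega⟩ := rfl
      rw [h1, h2, hκ j]
    intro i
    rw [key, key]
    refine congrArg κ0 (Fin.ext ?_)
    show (2 * i.val) / 2 = (2 * i.val + 1) / 2
    omega
  · rintro ⟨v, l, j, hv⟩
    exact ⟨tup l, ⟨l, rfl⟩, j, Subtype.ext hv⟩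
end

section
/- For every r ≥ 1, n ≥ 1, and c ≥ 1 there exists a set system (X, M) such that every set in M has exactly r elements, any two distinct sets in M intersect in at most one element, and every coloring of X with c colors admits a monochromatic set in M. -/
open Combinatorics Function

lemma line_injective {r : ℕ} {ι : Type} (l : Line (Fin r) ι) :
    Function.Injective (fun a => (l a : ι → Fin r)) := by
  obtain ⟨i, hi⟩ := l.proper
  intro a b hab
  have := congrFun hab i
  simpa [Line.coe_apply, hi] using this

lemma line_eq_of_two_s9 {r : ℕ} {ι : Type} (l m : Line (Fin r) ι) {x y : ι → Fin r}
    (hxy : x ≠ y)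
    (hxl : ∃ a, (l a : ι → Fin r) = x) (hyl : ∃ a, (l a : ι → Fin r) = y)
    (hxm : ∃ a, (m a : ι → Fin r) = x) (hym : ∃ a, (m a : ι → Fin r) = y) :
    l = m := by
  obtain ⟨a, ha⟩ := hxl; obtain ⟨b, hb⟩ := hyl
  obtain ⟨a', ha'⟩ := hxm; obtain ⟨b', hb'⟩ := hym
  have hab : a ≠ b := fun h => hxy (ha ▸ hb ▸ h ▸ rfl)
  have hab' : a' ≠ b' := fun h => hxy (ha' ▸ hb' ▸ h ▸ rfl)
  ext i v
  have hx := congrFun ha i; have hy := congrFun hb i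
  have hx' := congrFun ha' i; have hy' := congrFun hb' i
  simp only [Line.coe_apply] at hx hy hx' hy'
  cases hl : l.idxFun i with
  | none =>
    cases hm : m.idxFun i with
    | none => simp
    | some w =>
      exfalso
      rw [hl] at hx hy; rw [hm] at hx' hy'
      simp at hx hy hx' hy'
      exact hab (by rw [hx, hy, ← hx', ← hy'])
  | some w =>
    cases hm : m.idxFun i with
    | none =>
      exfalso
      rw [hl] at hx hy; rw [hm] at hx' hy'
      simp at hx hy hx' hy'
      exact hab' (by rw [hx', hy', ← hx, ← hy])
    | some w' =>
      rw [hl] at hx; rw [hm] at hx'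
      simp at hx hx'
      simp [hx, hx']

/-- Auxiliary Ramsey-type set system: `r`-element sets pairwise intersecting in at most one
point such that every `c`-coloring admits a monochromatic set. -/
theorem ramsey_set_system (r n c : ℕ) (hr : 1 ≤ r) (hn : 1 ≤ n) (hc : 1 ≤ c) :
    ∃ (X : Type) (_ : Fintype X) (_ : DecidableEq X) (M : Set (Finset X)),
      (∀ A ∈ M, A.card = r) ∧
      (∀ A ∈ M, ∀ B ∈ M, A ≠ B → (A ∩ B).card ≤ 1) ∧
      ∀ χ : X → Fin c, ∃ A ∈ M, ∀ x ∈ A, ∀ y ∈ A, χ x = χ y := by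
  classical
  obtain ⟨ι, hι, hHJ⟩ := Line.exists_mono_in_high_dimension (Fin r) (Fin c)
  refine ⟨ι → Fin r, inferInstance, Classical.decEq _,
    {A | ∃ l : Line (Fin r) ι, A = Finset.univ.image (fun a => (l a : ι → Fin r))}, ?_, ?_, ?_⟩
  · rintro A ⟨l, rfl⟩
    rw [Finset.card_image_of_injective _ (line_injective l)]
    simp
  · rintro A ⟨l, rfl⟩ B ⟨m, rfl⟩ hAB
    by_contra h
    push_neg at h
    obtain ⟨x, hx, y, hy, hxy⟩ := Finset.one_lt_card.mp h
    simp only [Finset.mem_inter, Finset.mem_image, Finset.mem_univ, true_and] at hx hy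
    exact hAB (by rw [line_eq_of_two_s9 l m hxy hx.1 hy.1 hx.2 hy.2])
  · intro χ
    obtain ⟨l, c₀, hc₀⟩ := hHJ χ
    refine ⟨_, ⟨l, rfl⟩, ?_⟩
    simp only [Finset.mem_image, Finset.mem_univ, true_and]
    rintro x ⟨a, rfl⟩ y ⟨b, rfl⟩
    rw [hc₀, hc₀]
end

section
/- If a relational structure A is irreducible (any two distinct vertices lie in a common relational tuple) and φ: A → D is a homomorphism into the free amalgam D of B₁ and B₂ over C, then the image φ(A) is entirely contained in B₁ or entirely contained in B₂. -/
open RelStruct in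
/-- The homomorphic image of an irreducible structure in a free amalgam lies entirely in one
of the two sides. -/
theorem irreducible_image_in_side {I : Type} {ar : I → ℕ} (A D : RelStruct I ar)
    (SA SB : Set D.V) (hcover : SA ∪ SB = Set.univ)
    (hfree : ∀ i, ∀ t ∈ D.rel i, Set.range t ⊆ SA ∨ Set.range t ⊆ SB)
    (hirr : Irreducible A) (φ : A.V → D.V) (hφ : IsHom A D φ) :
    Set.range φ ⊆ SA ∨ Set.range φ ⊆ SB := by
  by_cases hA : Set.range φ ⊆ SA
  · exact Or.inl hA
  · right
    obtain ⟨d, hd, haA⟩ := Set.not_subset.mp hA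
    obtain ⟨a, rfl⟩ := hd
    rintro _ ⟨b, rfl⟩
    by_cases hab : b = a
    · subst hab
      have := Set.mem_univ (φ b)
      rw [← hcover] at this
      rcases this with h | h
      · exact absurd h haA
      · exact h
    · obtain ⟨i, t, ht, ⟨k, hk⟩, ⟨l, hl⟩⟩ := hirr b a hab
      have hDt := hφ i t ht
      rcases hfree i _ hDt with h | h
      · exact absurd (h ⟨l, by simp [hl]⟩) haA
      · exact h ⟨k, by simp [hk]⟩
end
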